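/- arXiv:1811.10492 — 4 statements merged into one kernel-verified Lean document; each statement's English description precedes it below -/
import Mathlib

section
/- For every x ∈ ℝ, the integral ∫_ℝ dy / ((1+|x-y|²)(1+|y|²)) is at most C/(1+|x|²) for some absolute constant C > 0. -/
open MeasureTheory

theorem stmt0 : ∃ C > (0:ℝ), ∀ x : ℝ,
    (∫ y : ℝ, 1 / ((1 + |x - y| ^ 2) * (1 + |y| ^ 2))) ≤ C / (1 + |x| ^ 2) := by
  refine ⟨4 * Real.pi, by positivity, fun x => ?_⟩
  simp only [sq_abs]
  have hbase : Integrable (fun y : ℝ => (1 + y ^ 2)⁻¹) := integrable_inv_one_add_sq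
  have hshift : Integrable (fun y : ℝ => (1 + (x - y) ^ 2)⁻¹) :=
    (integrable_comp_sub_left (fun y : ℝ => (1 + y ^ 2)⁻¹) x).mpr hbase
  set g : ℝ → ℝ := fun y => 2 / (1 + x ^ 2) * ((1 + (x - y) ^ 2)⁻¹ + (1 + y ^ 2)⁻¹) with hg_def
  have hg : Integrable g := ((hshift.add hbase).const_mul _)
  have hf : Integrable (fun y : ℝ => 1 / ((1 + (x - y) ^ 2) * (1 + y ^ 2))) := by
    apply hbase.mono
    · apply Continuous.aestronglyMeasurable
      fun_prop (disch := intro y; positivity)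
    · filter_upwards with y
      have hA : (0:ℝ) < 1 + (x - y) ^ 2 := by positivity
      have hB : (0:ℝ) < 1 + y ^ 2 := by positivity
      rw [Real.norm_eq_abs, Real.norm_eq_abs, abs_of_pos (by positivity),
        abs_of_pos (by positivity)]
      rw [one_div, mul_inv]
      exact mul_le_of_le_one_left (by positivity)
        (inv_le_one_of_one_le₀ (le_add_of_nonneg_right (sq_nonneg (x - y))))
  have hle : ∀ y : ℝ, 1 / ((1 + (x - y) ^ 2) * (1 + y ^ 2)) ≤ g y := by
    intro y
    have hA : (0:ℝ) < 1 + (x - y) ^ 2 := by positivity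
    have hB : (0:ℝ) < 1 + y ^ 2 := by positivity
    have hX : (0:ℝ) < 1 + x ^ 2 := by positivity
    have key : (1:ℝ) + x ^ 2 ≤ 2 * ((1 + (x - y) ^ 2) + (1 + y ^ 2)) := by
      nlinarith [sq_nonneg (x - 2 * y)]
    rw [hg_def]
    rw [div_le_iff₀ (by positivity)]
    have expand : 2 / (1 + x ^ 2) * ((1 + (x - y) ^ 2)⁻¹ + (1 + y ^ 2)⁻¹) *
        ((1 + (x - y) ^ 2) * (1 + y ^ 2)) =
        2 * ((1 + (x - y) ^ 2) + (1 + y ^ 2)) / (1 + x ^ 2) := by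
      field_simp
      ring
    rw [expand, le_div_iff₀ hX, one_mul]
    exact key
  calc (∫ y : ℝ, 1 / ((1 + (x - y) ^ 2) * (1 + y ^ 2))) ≤ ∫ y, g y :=
        integral_mono hf hg hle
    _ = 2 / (1 + x ^ 2) * ((∫ y : ℝ, (1 + (x - y) ^ 2)⁻¹) + ∫ y : ℝ, (1 + y ^ 2)⁻¹) := by
        rw [hg_def, MeasureTheory.integral_const_mul, integral_add hshift hbase]
    _ = 2 / (1 + x ^ 2) * (Real.pi + Real.pi) := by
        rw [integral_univ_inv_one_add_sq,
          integral_sub_left_eq_self (fun y : ℝ => (1 + y ^ 2)⁻¹) volume x,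
          integral_univ_inv_one_add_sq]
    _ = 4 * Real.pi / (1 + x ^ 2) := by ring
end

section
/- For every η > 0, t > 0, and m > −1, there exists a constant C_m > 0 (depending only on m) such that ∫_ℝ (1 + |ξ|^m) exp(−ηt(|ξ|³ − |ξ|)) dξ ≤ C_m (e^{3ηt}/(ηt)^{1/3} + 1/(ηt)^{(m+1)/3}). -/
/-!
For `x ≥ -2` one has `x³ - x ≥ (2/3)(x³ - 1)`, since the difference is
`(x - 1)²(x + 2)/3`. Hence, with `s = ηt`, the integrand is dominated by
`e^{2s/3} (1 + |ξ|^m) e^{-(2s/3)|ξ|³}`, whose integral is a Gamma-function expression of size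
`e^{2s/3} (s^{-1/3} + s^{-(m+1)/3})`. The factor `e^{2s/3}` is then absorbed: by the constant `3`
when `s ≤ 1`, and by `e^{3s} s^{-1/3}` when `s ≥ 1`.
-/

open MeasureTheory Real Set

theorem integrable_comp_abs {E : Type*} [NormedAddCommGroup E] {f : ℝ → E}
    (hf : IntegrableOn f (Ioi 0)) : Integrable (fun x => f |x|) := by
  have hf' : IntegrableOn f (Ici 0) := Iff.mpr integrableOn_Ici_iff_integrableOn_Ioi hf
  have hneg : IntegrableOn (fun x => f |x|) (Iic 0) := by
    refine (neg_zero (G := ℝ) ▸ hf').comp_neg_Iic.congr_fun (fun x hx => ?_) measurableSet_Iic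
    rw [abs_of_nonpos hx]
  have hpos : IntegrableOn (fun x => f |x|) (Ici 0) :=
    hf'.congr_fun (fun x hx => by rw [abs_of_nonneg hx]) measurableSet_Ici
  simpa [Iic_union_Ici] using hneg.union hpos

theorem integrable_abs_rpow_mul_exp_neg_mul_abs_rpow {p q b : ℝ} (hp : 0 < p) (hq : -1 < q)
    (hb : 0 < b) : Integrable (fun x : ℝ => |x| ^ q * exp (-b * |x| ^ p)) :=
  integrable_comp_abs (f := fun x => x ^ q * exp (-b * x ^ p))
    (integrableOn_rpow_mul_exp_neg_mul_rpow hq hp hb)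

theorem integral_abs_rpow_mul_exp_neg_mul_abs_rpow {p q b : ℝ} (hp : 0 < p) (hq : -1 < q)
    (hb : 0 < b) :
    ∫ x : ℝ, |x| ^ q * exp (-b * |x| ^ p) =
      2 * (b ^ (-(q + 1) / p) * (1 / p) * Gamma ((q + 1) / p)) := by
  rw [integral_comp_abs (f := fun x => x ^ q * exp (-b * x ^ p)),
    integral_rpow_mul_exp_neg_mul_rpow hp hq hb]

theorem integrable_one_add_abs_rpow_mul_exp_neg_mul_abs_rpow {m p b : ℝ} (hp : 0 < p)
    (hm : -1 < m) (hb : 0 < b) :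
    Integrable (fun x : ℝ => (1 + |x| ^ m) * exp (-b * |x| ^ p)) := by
  refine ((integrable_abs_rpow_mul_exp_neg_mul_abs_rpow hp neg_one_lt_zero hb).add
    (integrable_abs_rpow_mul_exp_neg_mul_abs_rpow hp hm hb)).congr (ae_of_all _ fun x => ?_)
  simp [add_mul]

theorem integral_one_add_abs_rpow_mul_exp_neg_mul_abs_rpow {m p b : ℝ} (hp : 0 < p)
    (hm : -1 < m) (hb : 0 < b) :
    ∫ x : ℝ, (1 + |x| ^ m) * exp (-b * |x| ^ p) =
      2 / p * (Gamma (1 / p) / b ^ (1 / p) + Gamma ((m + 1) / p) / b ^ ((m + 1) / p)) := by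
  calc ∫ x : ℝ, (1 + |x| ^ m) * exp (-b * |x| ^ p)
      = ∫ x : ℝ, |x| ^ (0 : ℝ) * exp (-b * |x| ^ p) + |x| ^ m * exp (-b * |x| ^ p) := by
        simp only [rpow_zero, add_mul]
    _ = (∫ x : ℝ, |x| ^ (0 : ℝ) * exp (-b * |x| ^ p)) +
          ∫ x : ℝ, |x| ^ m * exp (-b * |x| ^ p) :=
        integral_add (integrable_abs_rpow_mul_exp_neg_mul_abs_rpow hp neg_one_lt_zero hb)
          (integrable_abs_rpow_mul_exp_neg_mul_abs_rpow hp hm hb)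
    _ = _ := by
        rw [integral_abs_rpow_mul_exp_neg_mul_abs_rpow hp neg_one_lt_zero hb,
          integral_abs_rpow_mul_exp_neg_mul_abs_rpow hp hm hb, neg_div, neg_div, rpow_neg hb.le,
          rpow_neg hb.le, zero_add]
        ring

theorem exp_neg_mul_cube_sub_le {s x : ℝ} (hs : 0 ≤ s) (hx : -2 ≤ x) :
    exp (-s * (x ^ 3 - x)) ≤ exp (2 * s / 3) * exp (-(2 * s / 3) * x ^ 3) := by
  rw [← exp_add, exp_le_exp]
  nlinarith [mul_nonneg (mul_nonneg hs (sq_nonneg (x - 1))) (by linarith : 0 ≤ x + 2)]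

theorem exp_two_mul_div_three_div_rpow_le {s a : ℝ} (hs : 0 < s) (ha : 0 ≤ a) :
    exp (2 * s / 3) / s ^ a ≤ 3 * (exp (3 * s) / s ^ ((1 : ℝ) / 3) + 1 / s ^ a) := by
  have hE : 0 ≤ exp (3 * s) / s ^ ((1 : ℝ) / 3) := by positivity
  have hS : 0 ≤ 1 / s ^ a := by positivity
  rcases le_or_gt s 1 with hs1 | hs1
  · have : exp (2 * s / 3) / s ^ a ≤ 3 * (1 / s ^ a) := by
      rw [mul_one_div]
      gcongr
      calc exp (2 * s / 3) ≤ exp 1 := exp_le_exp.mpr (by linarith)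
        _ ≤ 3 := exp_one_lt_three.le
    linarith
  · have hroot : s ^ ((1 : ℝ) / 3) ≤ exp (7 * s / 3) :=
      calc s ^ ((1 : ℝ) / 3) ≤ s := rpow_le_self_of_one_le hs1.le (by norm_num)
        _ ≤ exp (7 * s / 3) := by linarith [add_one_le_exp (7 * s / 3)]
    have : exp (2 * s / 3) / s ^ a ≤ exp (3 * s) / s ^ ((1 : ℝ) / 3) :=
      calc exp (2 * s / 3) / s ^ a ≤ exp (2 * s / 3) :=
            div_le_self (exp_pos _).le (one_le_rpow hs1.le ha)
        _ ≤ exp (3 * s) / s ^ ((1 : ℝ) / 3) := by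
            rw [le_div_iff₀ (by positivity), show 3 * s = 2 * s / 3 + 7 * s / 3 by ring, exp_add]
            gcongr
    linarith

theorem exp_two_mul_div_three_mul_add_le {s a c₁ c₂ : ℝ} (hs : 0 < s) (ha : 0 ≤ a)
    (hc₁ : 0 ≤ c₁) (hc₂ : 0 ≤ c₂) :
    exp (2 * s / 3) * (c₁ / s ^ ((1 : ℝ) / 3) + c₂ / s ^ a) ≤
      (c₁ + 3 * c₂) * (exp (3 * s) / s ^ ((1 : ℝ) / 3) + 1 / s ^ a) := by
  have h₁ : exp (2 * s / 3) / s ^ ((1 : ℝ) / 3) ≤ exp (3 * s) / s ^ ((1 : ℝ) / 3) := by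
    gcongr; linarith
  have h₂ := exp_two_mul_div_three_div_rpow_le hs ha
  have : 0 ≤ 1 / s ^ a := by positivity
  calc exp (2 * s / 3) * (c₁ / s ^ ((1 : ℝ) / 3) + c₂ / s ^ a)
      = c₁ * (exp (2 * s / 3) / s ^ ((1 : ℝ) / 3)) + c₂ * (exp (2 * s / 3) / s ^ a) := by ring
    _ ≤ c₁ * (exp (3 * s) / s ^ ((1 : ℝ) / 3) + 1 / s ^ a)
          + c₂ * (3 * (exp (3 * s) / s ^ ((1 : ℝ) / 3) + 1 / s ^ a)) := by gcongr; linarith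
    _ = _ := by ring

theorem stmt4 : ∀ m : ℝ, -1 < m → ∃ C > (0:ℝ), ∀ η t : ℝ, 0 < η → 0 < t →
    (∫ ξ : ℝ, (1 + |ξ| ^ m) * Real.exp (-(η * t) * (|ξ| ^ 3 - |ξ|))) ≤
      C * (Real.exp (3 * η * t) / (η * t) ^ ((1:ℝ)/3) + 1 / (η * t) ^ ((m + 1) / 3)) := by
  intro m hm
  -- `c a / s ^ a = (2 / 3) Γ(a) / (2s/3) ^ a`, the Gamma integral at `b = 2s/3`
  set c : ℝ → ℝ := fun a => 2 / 3 * Gamma a / (2 / 3) ^ a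
  have hc : ∀ a, 0 < a → 0 < c a := fun a ha => by have := Gamma_pos_of_pos ha; positivity
  have ha : 0 < (m + 1) / 3 := by linarith
  refine ⟨c (1 / 3) + 3 * c ((m + 1) / 3), by linarith [hc (1 / 3) (by norm_num), hc _ ha], ?_⟩
  intro η t hη ht
  set s := η * t
  have hs : 0 < s := mul_pos hη ht
  have hmajorant : ∀ ξ : ℝ, (1 + |ξ| ^ m) * exp (-s * (|ξ| ^ 3 - |ξ|)) ≤
      exp (2 * s / 3) * ((1 + |ξ| ^ m) * exp (-(2 * s / 3) * |ξ| ^ (3 : ℝ))) := by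
    intro ξ
    rw [rpow_ofNat, mul_left_comm]
    exact mul_le_mul_of_nonneg_left
      (exp_neg_mul_cube_sub_le hs.le (by linarith [abs_nonneg ξ])) (by positivity)
  have hb : 0 < 2 * s / 3 := by positivity
  calc (∫ ξ : ℝ, (1 + |ξ| ^ m) * exp (-s * (|ξ| ^ 3 - |ξ|)))
      ≤ ∫ ξ : ℝ,
          exp (2 * s / 3) * ((1 + |ξ| ^ m) * exp (-(2 * s / 3) * |ξ| ^ (3 : ℝ))) :=
        integral_mono_of_nonneg (ae_of_all _ fun ξ => by positivity)
          ((integrable_one_add_abs_rpow_mul_exp_neg_mul_abs_rpow three_pos hm hb).const_mul _)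
          (ae_of_all _ hmajorant)
    _ = exp (2 * s / 3) *
          (c (1 / 3) / s ^ ((1 : ℝ) / 3) + c ((m + 1) / 3) / s ^ ((m + 1) / 3)) := by
        rw [integral_const_mul,
          integral_one_add_abs_rpow_mul_exp_neg_mul_abs_rpow three_pos hm hb,
          show 2 * s / 3 = 2 / 3 * s by ring, mul_rpow (by norm_num) hs.le,
          mul_rpow (by norm_num) hs.le]
        ring
    _ ≤ _ := by
        rw [show 3 * η * t = 3 * s by ring]
        exact exp_two_mul_div_three_mul_add_le hs ha.le (hc _ (by norm_num)).le (hc _ ha).le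
end

section
/- Let η > 0 and t > 0 and define K_η(t,x) = ∫_ℝ e^{2πi x ξ} e^{iξ³t − ηt(|ξ|³−|ξ|)} dξ. Then for all x ∈ ℝ, |K_η(t,x)| ≤ C e^{3ηt}/(ηt)^{1/3} for an absolute constant C > 0. -/
open MeasureTheory

noncomputable def ostSymbol (η t ξ : ℝ) : ℂ :=
  Complex.exp (Complex.I * ((ξ ^ 3 * t : ℝ) : ℂ) - ((η * t * (|ξ| ^ 3 - |ξ|) : ℝ) : ℂ))

noncomputable def ostKernel (η t x : ℝ) : ℂ :=
  ∫ ξ : ℝ, Complex.exp (2 * Real.pi * Complex.I * ((x * ξ : ℝ) : ℂ)) * ostSymbol η t ξ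

/-!
The oscillating factors have modulus one, so `‖K_η(t, x)‖ ≤ ∫ exp (-a (|ξ|³ - |ξ|))` with
`a = η t`. Since `|ξ| ≤ 1 + |ξ|³ / 2`, the integrand is at most `exp a · exp (-(a / 2) |ξ|³)`,
whose integral is `2 Γ(4/3) (a / 2) ^ (-1/3) · exp a ≤ 4 Γ(4/3) exp (3a) / a ^ (1/3)`.
-/

open Real Set

lemma integrable_comp_abs_of_integrableOn_Ioi {E : Type*} [NormedAddCommGroup E] {f : ℝ → E}
    (hf : IntegrableOn f (Ioi 0)) : Integrable fun x => f |x| := by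
  have hIoi : IntegrableOn (fun x => f |x|) (Ioi 0) :=
    hf.congr_fun (fun x hx => by rw [abs_of_pos hx]) measurableSet_Ioi
  have hIic : IntegrableOn (fun x => f |x|) (Iic 0) := by
    have hneg : MeasurableEmbedding fun x : ℝ => -x := (Homeomorph.neg ℝ).measurableEmbedding
    rw [← Measure.map_neg_eq_self (volume : Measure ℝ), hneg.integrableOn_map_iff]
    simp_rw [Function.comp_def, abs_neg, neg_preimage, neg_Iic, neg_zero]
    exact Iff.mpr integrableOn_Ici_iff_integrableOn_Ioi hIoi
  simpa [Iic_union_Ioi] using hIic.union hIoi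

lemma integrable_exp_neg_mul_abs_rpow {p b : ℝ} (hp : 0 < p) (hb : 0 < b) :
    Integrable fun x : ℝ => exp (-b * |x| ^ p) :=
  integrable_comp_abs_of_integrableOn_Ioi (f := fun x => exp (-b * x ^ p)) <| by
    simpa using integrableOn_rpow_mul_exp_neg_mul_rpow (s := 0) neg_one_lt_zero hp hb

lemma integral_exp_neg_mul_abs_rpow {p b : ℝ} (hp : 0 < p) (hb : 0 < b) :
    ∫ x : ℝ, exp (-b * |x| ^ p) = 2 * (b ^ (-1 / p) * Gamma (1 / p + 1)) := by
  rw [integral_comp_abs (f := fun x => exp (-b * x ^ p)), integral_exp_neg_mul_rpow hp hb]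

lemma norm_ostSymbol (η t ξ : ℝ) : ‖ostSymbol η t ξ‖ = exp (-(η * t * (|ξ| ^ 3 - |ξ|))) := by
  rw [ostSymbol, Complex.norm_exp, Complex.sub_re, Complex.ofReal_re, Complex.re_mul_ofReal,
    Complex.I_re, zero_mul, zero_sub]

lemma norm_ostKernel_le (η t x : ℝ) :
    ‖ostKernel η t x‖ ≤ ∫ ξ : ℝ, exp (-(η * t * (|ξ| ^ 3 - |ξ|))) := by
  refine (norm_integral_le_integral_norm _).trans_eq (integral_congr_ae ?_)
  refine Filter.Eventually.of_forall fun ξ => ?_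
  dsimp only
  rw [norm_mul, norm_ostSymbol, Complex.norm_exp]
  simp

lemma le_one_add_pow_three_div_two {r : ℝ} (hr : 0 ≤ r) : r ≤ 1 + r ^ 3 / 2 := by
  nlinarith [sq_nonneg (r - 1), mul_nonneg hr (sq_nonneg (r - 1))]

lemma integral_exp_neg_mul_abs_cube_sub_abs_le {a : ℝ} (ha : 0 < a) :
    ∫ ξ : ℝ, exp (-(a * (|ξ| ^ 3 - |ξ|)))
      ≤ exp a * (2 * ((a / 2) ^ (-1 / (3 : ℝ)) * Gamma (1 / 3 + 1))) := by
  have hdom : ∀ ξ : ℝ, exp (-(a * (|ξ| ^ 3 - |ξ|))) ≤ exp a * exp (-(a / 2) * |ξ| ^ (3 : ℝ)) := by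
    intro ξ
    rw [← exp_add, exp_le_exp, rpow_ofNat]
    nlinarith [le_one_add_pow_three_div_two (abs_nonneg ξ)]
  calc ∫ ξ : ℝ, exp (-(a * (|ξ| ^ 3 - |ξ|)))
      ≤ ∫ ξ : ℝ, exp a * exp (-(a / 2) * |ξ| ^ (3 : ℝ)) :=
        integral_mono_of_nonneg (.of_forall fun _ => (exp_pos _).le)
          ((integrable_exp_neg_mul_abs_rpow (by norm_num) (by positivity)).const_mul _)
          (.of_forall hdom)
    _ = _ := by
        rw [integral_const_mul, integral_exp_neg_mul_abs_rpow (by norm_num) (by positivity)]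

lemma half_rpow_neg_one_third_le {a : ℝ} (ha : 0 < a) :
    (a / 2) ^ (-1 / (3 : ℝ)) ≤ 2 / a ^ ((1 : ℝ) / 3) := by
  have h2 : (2 : ℝ) ^ ((1 : ℝ) / 3) ≤ 2 := rpow_le_self_of_one_le one_le_two (by norm_num)
  rw [neg_div, rpow_neg (by positivity), ← inv_rpow (by positivity), inv_div,
    div_rpow zero_le_two ha.le]
  gcongr

theorem stmt5 : ∃ C > (0:ℝ), ∀ η t x : ℝ, 0 < η → 0 < t →
    ‖ostKernel η t x‖ ≤ C * Real.exp (3 * η * t) / (η * t) ^ ((1:ℝ)/3) := by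
  refine ⟨4 * Gamma (1 / 3 + 1), by positivity, fun η t x hη ht => ?_⟩
  have ha : 0 < η * t := mul_pos hη ht
  calc ‖ostKernel η t x‖
      ≤ exp (η * t) * (2 * ((η * t / 2) ^ (-1 / (3 : ℝ)) * Gamma (1 / 3 + 1))) :=
        (norm_ostKernel_le η t x).trans (integral_exp_neg_mul_abs_cube_sub_abs_le ha)
    _ ≤ exp (3 * η * t) * (2 * (2 / (η * t) ^ ((1 : ℝ) / 3) * Gamma (1 / 3 + 1))) := by
        gcongr
        · nlinarith
        · exact half_rpow_neg_one_third_le ha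
    _ = 4 * Gamma (1 / 3 + 1) * exp (3 * η * t) / (η * t) ^ ((1 : ℝ) / 3) := by ring
end

section
/- Let η > 0 and t > 0 and define K_η(t,x) = ∫_ℝ e^{2πi x ξ} e^{iξ³t − ηt(|ξ|³−|ξ|)} dξ. Then there exists a constant c_η > 0 depending only on η, of the form c_η = C η^{−1/3}(1 + (1/η + 2)²), such that for all x ∈ ℝ, |K_η(t,x)| ≤ c_η (e^{5ηt}/t^{1/3}) · 1/(1+|x|²). -/
/-!
The symbol is conjugate-symmetric in `ξ`, so `K = 2 Re J` with `J = ∫₀^∞ e^{iθξ} g(ξ) dξ`,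
`θ = 2πx`, where on the half-line `g(ξ) = exp(bξ³ + aξ)` with `a = ηt`, `b = it - a` is smooth
and bounded by `e^a e^{-aξ³/2}`. This bound alone gives `|K| ≲ e^a a^{-1/3}`. Two integrations by
parts give `θ² J = iθ - a - ∫₀^∞ e^{iθξ} g''(ξ) dξ`; the boundary term `iθ` is imaginary, so
`θ² |Re J| ≤ a + ∫₀^∞ |g''|`, which decays like `1/x²`. The moments `∫₀^∞ ξ^k e^{-aξ³/2} dξ` are
Gamma values times `a^{-(k+1)/3}`, and every power `a^p e^a` that occurs is absorbed by
`a^{-1/3} e^{5a}`.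
-/

open MeasureTheory

open Set Filter Topology ComplexConjugate
open Complex (I)
open scoped Real Complex

theorem norm_cexp_ofReal_mul_I_mul (θ ξ : ℝ) (z : ℂ) : ‖cexp (θ * ξ * I) * z‖ = ‖z‖ := by
  rw [norm_mul, ← Complex.ofReal_mul, Complex.norm_exp_ofReal_mul_I, one_mul]

theorem MeasureTheory.IntegrableOn.cexp_ofReal_mul_I_mul {h : ℝ → ℂ} {s : Set ℝ}
    (hh : IntegrableOn h s) (θ : ℝ) : IntegrableOn (fun ξ : ℝ => cexp (θ * ξ * I) * h ξ) s :=
  hh.bdd_mul (by fun_prop) (ae_of_all _ fun ξ => by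
    simpa using (Complex.norm_exp_ofReal_mul_I (θ * ξ)).le)

theorem integral_eq_two_mul_re_integral_Ioi_of_conj {f : ℝ → ℂ} (hf : IntegrableOn f (Ioi 0))
    (hconj : ∀ ξ, f (-ξ) = conj (f ξ)) :
    ∫ ξ, f ξ = 2 * (∫ ξ in Ioi 0, f ξ).re := by
  have hIic : IntegrableOn f (Iic 0) := by
    rw [← (Measure.measurePreserving_neg (volume : Measure ℝ)).integrableOn_comp_preimage
      (Homeomorph.neg ℝ).measurableEmbedding]
    simp only [Function.comp_def, neg_preimage, neg_Iic, neg_zero, hconj]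
    exact (integrableOn_Ici_iff_integrableOn_Ioi).2 (Complex.conjLIE.integrable_comp_iff.2 hf)
  have hIic_eq : ∫ ξ in Iic 0, f ξ = conj (∫ ξ in Ioi 0, f ξ) := by
    rw [← neg_zero, ← integral_comp_neg_Ioi, neg_zero]
    simp_rw [hconj]
    exact integral_conj
  rw [← intervalIntegral.integral_Iic_add_Ioi hIic hf, hIic_eq, add_comm, Complex.add_conj]
  push_cast
  rfl

theorem sq_mul_integral_Ioi_cexp_mul_I_mul_eq {g g' g'' : ℝ → ℂ} (θ : ℝ)
    (hg : ∀ ξ, HasDerivAt g (g' ξ) ξ) (hg' : ∀ ξ, HasDerivAt g' (g'' ξ) ξ)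
    (hgi : IntegrableOn g (Ioi 0)) (hg'i : IntegrableOn g' (Ioi 0))
    (hg''i : IntegrableOn g'' (Ioi 0)) :
    (θ : ℂ) ^ 2 * ∫ ξ : ℝ in Ioi 0, cexp (θ * ξ * I) * g ξ
      = θ * I * g 0 - g' 0 - ∫ ξ : ℝ in Ioi 0, cexp (θ * ξ * I) * g'' ξ := by
  set E : ℝ → ℂ := fun ξ => cexp (θ * ξ * I)
  have hE : ∀ ξ, HasDerivAt E (θ * I * E ξ) ξ := fun ξ => by
    have := ((hasDerivAt_id (ξ : ℂ)).const_mul (θ * I : ℂ)).cexp.comp_ofReal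
    simpa [E, mul_comm, mul_left_comm, mul_assoc] using this
  -- `U` is the boundary term of both integrations by parts against `E`.
  set U : ℝ → ℂ := fun ξ => E ξ * (g' ξ - θ * I * g ξ)
  have hU : ∀ ξ, HasDerivAt U (E ξ * g'' ξ + θ ^ 2 * (E ξ * g ξ)) ξ := fun ξ => by
    refine ((hE ξ).mul ((hg' ξ).sub ((hg ξ).const_mul (θ * I : ℂ)))).congr_deriv ?_
    simp only [Pi.sub_apply]
    linear_combination (-θ ^ 2 * E ξ * g ξ : ℂ) * Complex.I_sq
  have hU_top : Tendsto U atTop (𝓝 0) := by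
    have hlim := (tendsto_zero_of_hasDerivAt_of_integrableOn_Ioi (fun ξ _ => hg' ξ) hg''i hg'i).sub
      ((tendsto_zero_of_hasDerivAt_of_integrableOn_Ioi (fun ξ _ => hg ξ) hg'i hgi).const_mul
        (θ * I : ℂ))
    rw [mul_zero, sub_zero] at hlim
    exact squeeze_zero_norm (fun ξ => (norm_cexp_ofReal_mul_I_mul _ _ _).le)
      (tendsto_norm_zero.comp hlim)
  have hEg'' := hg''i.cexp_ofReal_mul_I_mul θ
  have hEg := (hgi.cexp_ofReal_mul_I_mul θ).const_mul ((θ : ℂ) ^ 2)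
  have hFTC := integral_Ioi_of_hasDerivAt_of_tendsto' (fun ξ _ => hU ξ) (hEg''.add hEg) hU_top
  rw [integral_add hEg'' hEg, integral_const_mul] at hFTC
  simp only [U, E, Complex.ofReal_zero, mul_zero, zero_mul, Complex.exp_zero, one_mul] at hFTC
  linear_combination hFTC

noncomputable def cubicMoment (k : ℕ) (c : ℝ) : ℝ := ∫ ξ in Ioi 0, ξ ^ k * rexp (-c * ξ ^ 3)

theorem integrableOn_pow_mul_exp_neg_mul_cube (k : ℕ) {c : ℝ} (hc : 0 < c) :
    IntegrableOn (fun ξ : ℝ => ξ ^ k * rexp (-c * ξ ^ 3)) (Ioi 0) := by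
  refine (integrableOn_rpow_mul_exp_neg_mul_rpow (s := k) (p := 3)
    (neg_one_lt_zero.trans_le k.cast_nonneg) (by norm_num) hc).congr_fun (fun ξ _ => ?_)
    measurableSet_Ioi
  norm_cast

theorem cubicMoment_eq (k : ℕ) {c : ℝ} (hc : 0 < c) :
    cubicMoment k c = c ^ (-((k : ℝ) + 1) / 3) * (1 / 3) * Real.Gamma (((k : ℝ) + 1) / 3) := by
  rw [← integral_rpow_mul_exp_neg_mul_rpow (by norm_num)
    (neg_one_lt_zero.trans_le k.cast_nonneg) hc]
  refine setIntegral_congr_fun measurableSet_Ioi fun ξ _ => ?_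
  norm_cast

theorem rpow_le_exp_mul {a q : ℝ} (ha : 0 ≤ a) (hq : 0 ≤ q) : a ^ q ≤ rexp (q * a) := by
  rw [mul_comm, Real.exp_mul]
  exact Real.rpow_le_rpow ha (by linarith [Real.add_one_le_exp a]) hq

theorem exp_mul_rpow_le {a p : ℝ} (ha : 0 < a) (hp : 0 ≤ p + 1 / 3) (hp' : p + 1 / 3 ≤ 4) :
    rexp a * a ^ p ≤ rexp (5 * a) * a ^ (-(1 : ℝ) / 3) := by
  have hsplit : a ^ p = a ^ (p + 1 / 3) * a ^ (-(1 : ℝ) / 3) := by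
    rw [← Real.rpow_add ha]
    ring_nf
  calc rexp a * a ^ p ≤ rexp a * (rexp (4 * a) * a ^ (-(1 : ℝ) / 3)) := by
        rw [hsplit]
        gcongr
        exact (rpow_le_exp_mul ha.le hp).trans (Real.exp_le_exp.2 (by nlinarith))
    _ = rexp (5 * a) * a ^ (-(1 : ℝ) / 3) := by
        rw [← mul_assoc, ← Real.exp_add]
        ring_nf

theorem exp_mul_pow_mul_cubicMoment_le {a : ℝ} (ha : 0 < a) {j k : ℕ} (hk : k ≤ 5)
    (hkj : k ≤ 3 * j) (hjk : 3 * j ≤ k + 12) :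
    rexp a * a ^ j * cubicMoment k (a / 2)
      ≤ 2 * Real.Gamma (((k : ℝ) + 1) / 3) * (rexp (5 * a) * a ^ (-(1 : ℝ) / 3)) := by
  set s : ℝ := ((k : ℝ) + 1) / 3 with hs
  have hk' : (k : ℝ) ≤ 5 := by exact_mod_cast hk
  have hkj' : (k : ℝ) ≤ 3 * j := by exact_mod_cast hkj
  have hjk' : 3 * (j : ℝ) ≤ k + 12 := by exact_mod_cast hjk
  have htwo : (2 : ℝ) ^ s ≤ 4 := by
    calc (2 : ℝ) ^ s ≤ 2 ^ (2 : ℝ) :=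
          Real.rpow_le_rpow_of_exponent_le one_le_two (by rw [hs]; linarith)
      _ = 4 := by norm_num
  have hmoment : rexp a * a ^ j * cubicMoment k (a / 2)
      = (2 : ℝ) ^ s / 3 * Real.Gamma s * (rexp a * a ^ ((j : ℝ) - s)) := by
    rw [cubicMoment_eq k (half_pos ha), Real.div_rpow ha.le zero_le_two, Real.rpow_sub ha,
      Real.rpow_natCast, show -((k : ℝ) + 1) / 3 = -s by ring, Real.rpow_neg ha.le,
      Real.rpow_neg zero_le_two]
    field_simp
    rfl
  rw [hmoment]
  refine mul_le_mul (mul_le_mul_of_nonneg_right (by linarith)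
    (Real.Gamma_pos_of_pos (by positivity)).le)
    (exp_mul_rpow_le ha (by rw [hs]; linarith) (by rw [hs]; linarith)) (by positivity)
    (by positivity)

noncomputable def cubicExp (b a : ℂ) (ξ : ℝ) : ℂ := cexp (b * ξ ^ 3 + a * ξ)

section CubicExp

variable (b a : ℂ)

theorem hasDerivAt_cubicExp (ξ : ℝ) :
    HasDerivAt (cubicExp b a) ((3 * b * ξ ^ 2 + a) * cubicExp b a ξ) ξ := by
  have hp : HasDerivAt (fun z : ℂ => b * z ^ 3 + a * z) (3 * b * ξ ^ 2 + a) ξ :=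
    (((hasDerivAt_pow 3 (ξ : ℂ)).const_mul b).add
      ((hasDerivAt_id' (ξ : ℂ)).const_mul a)).congr_deriv (by ring)
  exact hp.cexp.comp_ofReal.congr_deriv (by rw [cubicExp]; ring)

theorem hasDerivAt_deriv_cubicExp (ξ : ℝ) :
    HasDerivAt (fun ξ : ℝ => (3 * b * ξ ^ 2 + a) * cubicExp b a ξ)
      ((6 * b * ξ + (3 * b * ξ ^ 2 + a) ^ 2) * cubicExp b a ξ) ξ := by
  have hp : HasDerivAt (fun ξ : ℝ => 3 * b * (ξ : ℂ) ^ 2 + a) (6 * b * ξ) ξ :=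
    (((hasDerivAt_pow 2 (ξ : ℂ)).const_mul (3 * b)).add_const a).comp_ofReal.congr_deriv
      (by ring)
  refine (hp.mul (hasDerivAt_cubicExp b a ξ)).congr_deriv ?_
  ring

theorem norm_cubicExp (ξ : ℝ) : ‖cubicExp b a ξ‖ = rexp (b.re * ξ ^ 3 + a.re * ξ) := by
  rw [cubicExp, Complex.norm_exp]
  simp [← Complex.ofReal_pow]

theorem continuous_cubicExp : Continuous (cubicExp b a) := by
  unfold cubicExp
  fun_prop

end CubicExp

section DecayingCubicExp

variable {b : ℂ} {a : ℝ}

theorem norm_cubicExp_le (ha : 0 ≤ a) (hb : b.re = -a) {ξ : ℝ} (hξ : 0 ≤ ξ) :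
    ‖cubicExp b a ξ‖ ≤ rexp a * rexp (-(a / 2) * ξ ^ 3) := by
  rw [norm_cubicExp, ← Real.exp_add, hb, Complex.ofReal_re]
  refine Real.exp_le_exp.2 ?_
  nlinarith [mul_nonneg ha (mul_nonneg hξ (sq_nonneg (ξ - 1))),
    mul_nonneg ha (sq_nonneg (ξ - 3 / 4))]

theorem integrableOn_pow_mul_cubicExp (ha : 0 < a) (hb : b.re = -a) (k : ℕ) :
    IntegrableOn (fun ξ : ℝ => (ξ : ℂ) ^ k * cubicExp b a ξ) (Ioi 0) := by
  refine ((integrableOn_pow_mul_exp_neg_mul_cube k (half_pos ha)).const_mul (rexp a)).mono'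
    ((Complex.continuous_ofReal.pow k).mul (continuous_cubicExp b a)).aestronglyMeasurable
    ((ae_restrict_iff' measurableSet_Ioi).2 (ae_of_all _ fun ξ hξ => ?_))
  rw [norm_mul, norm_pow, Complex.norm_real, Real.norm_of_nonneg (le_of_lt hξ), mul_left_comm]
  exact mul_le_mul_of_nonneg_left (norm_cubicExp_le ha.le hb hξ.le) (pow_nonneg hξ.le k)

theorem integrableOn_cubicExp (ha : 0 < a) (hb : b.re = -a) :
    IntegrableOn (cubicExp b a) (Ioi 0) := by
  simpa using integrableOn_pow_mul_cubicExp ha hb 0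

theorem integrableOn_eval_mul_cubicExp (ha : 0 < a) (hb : b.re = -a) (p : Polynomial ℂ) :
    IntegrableOn (fun ξ : ℝ => p.eval (ξ : ℂ) * cubicExp b a ξ) (Ioi 0) := by
  induction p using Polynomial.induction_on' with
  | add p q hp hq =>
    exact (hp.add hq).congr_fun (fun ξ _ => by simp [add_mul]) measurableSet_Ioi
  | monomial k c =>
    exact IntegrableOn.congr_fun ((integrableOn_pow_mul_cubicExp ha hb k).const_mul c)
      (fun ξ _ => by simp [mul_assoc]) measurableSet_Ioi

open Polynomial in
theorem integrableOn_deriv_cubicExp (ha : 0 < a) (hb : b.re = -a) :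
    IntegrableOn (fun ξ : ℝ => (3 * b * ξ ^ 2 + a) * cubicExp b a ξ) (Ioi 0) := by
  refine (integrableOn_eval_mul_cubicExp ha hb (C (3 * b) * X ^ 2 + C (a : ℂ))).congr_fun
    (fun ξ _ => ?_) measurableSet_Ioi
  simp

open Polynomial in
theorem integrableOn_deriv2_cubicExp (ha : 0 < a) (hb : b.re = -a) :
    IntegrableOn (fun ξ : ℝ => (6 * b * ξ + (3 * b * ξ ^ 2 + a) ^ 2) * cubicExp b a ξ)
      (Ioi 0) := by
  refine (integrableOn_eval_mul_cubicExp ha hb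
    (C (6 * b) * X + (C (3 * b) * X ^ 2 + C (a : ℂ)) ^ 2)).congr_fun (fun ξ _ => ?_)
    measurableSet_Ioi
  simp

theorem norm_deriv2_cubicExp_le (ha : 0 ≤ a) (hb : b.re = -a) {r : ℝ} (hbr : ‖b‖ ≤ a * r)
    {ξ : ℝ} (hξ : 0 ≤ ξ) :
    ‖(6 * b * ξ + (3 * b * ξ ^ 2 + a) ^ 2) * cubicExp b a ξ‖
      ≤ (6 * (a * r) * ξ + (3 * (a * r) * ξ ^ 2 + a) ^ 2)
        * (rexp a * rexp (-(a / 2) * ξ ^ 3)) := by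
  have hquad : ‖3 * b * ξ ^ 2 + a‖ ≤ 3 * (a * r) * ξ ^ 2 + a := by
    refine (norm_add_le _ _).trans ?_
    simp only [norm_mul, norm_pow, Complex.norm_real, Complex.norm_ofNat,
      Real.norm_of_nonneg ha, Real.norm_of_nonneg hξ]
    gcongr
  rw [norm_mul]
  refine mul_le_mul ((norm_add_le _ _).trans ?_) (norm_cubicExp_le ha hb hξ) (norm_nonneg _)
    (by nlinarith [norm_nonneg b])
  rw [norm_pow]
  gcongr
  simp only [norm_mul, Complex.norm_real, Complex.norm_ofNat, Real.norm_of_nonneg hξ]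
  gcongr

theorem integral_norm_deriv2_cubicExp_le (ha : 0 < a) (hb : b.re = -a) {r : ℝ}
    (hbr : ‖b‖ ≤ a * r) :
    ∫ ξ in Ioi 0, ‖(6 * b * ξ + (3 * b * ξ ^ 2 + a) ^ 2) * cubicExp b a ξ‖
      ≤ 6 * r * (rexp a * a ^ 1 * cubicMoment 1 (a / 2))
        + 9 * r ^ 2 * (rexp a * a ^ 2 * cubicMoment 4 (a / 2))
        + 6 * r * (rexp a * a ^ 2 * cubicMoment 2 (a / 2))
        + rexp a * a ^ 2 * cubicMoment 0 (a / 2) := by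
  set w : ℕ → ℝ → ℝ := fun k ξ => ξ ^ k * rexp (-(a / 2) * ξ ^ 3)
  have hw : ∀ k (c : ℝ), IntegrableOn (fun ξ => c * w k ξ) (Ioi 0) := fun k c =>
    (integrableOn_pow_mul_exp_neg_mul_cube k (half_pos ha)).const_mul c
  calc _ ≤ ∫ ξ in Ioi 0, (6 * r * (rexp a * a ^ 1) * w 1 ξ + 9 * r ^ 2 * (rexp a * a ^ 2) * w 4 ξ
          + 6 * r * (rexp a * a ^ 2) * w 2 ξ + rexp a * a ^ 2 * w 0 ξ) :=
        setIntegral_mono_on (integrableOn_deriv2_cubicExp ha hb).norm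
          ((((hw 1 _).add (hw 4 _)).add (hw 2 _)).add (hw 0 _)) measurableSet_Ioi
          fun ξ hξ => (norm_deriv2_cubicExp_le ha.le hb hbr (le_of_lt hξ)).trans_eq (by ring)
    _ = _ := by
      rw [integral_add, integral_add, integral_add]
      · simp only [integral_const_mul, cubicMoment, w]
        ring
      all_goals first
        | exact hw _ _
        | exact (hw 1 _).add (hw 4 _)
        | exact ((hw 1 _).add (hw 4 _)).add (hw 2 _)

theorem norm_integral_cexp_mul_cubicExp_le (ha : 0 < a) (hb : b.re = -a) (θ : ℝ) :
    ‖∫ ξ : ℝ in Ioi 0, cexp (θ * ξ * I) * cubicExp b a ξ‖ ≤ rexp a * cubicMoment 0 (a / 2) := by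
  rw [cubicMoment, ← integral_const_mul]
  refine norm_integral_le_of_norm_le
    ((integrableOn_pow_mul_exp_neg_mul_cube 0 (half_pos ha)).const_mul _)
    ((ae_restrict_iff' measurableSet_Ioi).2 (ae_of_all _ fun ξ hξ => ?_))
  rw [norm_cexp_ofReal_mul_I_mul, pow_zero, one_mul]
  exact norm_cubicExp_le ha.le hb (le_of_lt hξ)

theorem sq_mul_abs_re_integral_cexp_mul_cubicExp_le (ha : 0 < a) (hb : b.re = -a) (θ : ℝ) :
    θ ^ 2 * |(∫ ξ : ℝ in Ioi 0, cexp (θ * ξ * I) * cubicExp b a ξ).re|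
      ≤ a + ∫ ξ in Ioi 0, ‖(6 * b * ξ + (3 * b * ξ ^ 2 + a) ^ 2) * cubicExp b a ξ‖ := by
  have h := sq_mul_integral_Ioi_cexp_mul_I_mul_eq θ (hasDerivAt_cubicExp b a)
    (hasDerivAt_deriv_cubicExp b a) (integrableOn_cubicExp ha hb)
    (integrableOn_deriv_cubicExp ha hb) (integrableOn_deriv2_cubicExp ha hb)
  have hg0 : cubicExp b a 0 = 1 := by simp [cubicExp]
  -- the boundary term `θ * I * cubicExp b a 0 = θ * I` has no real part
  have hre : θ ^ 2 * (∫ ξ : ℝ in Ioi 0, cexp (θ * ξ * I) * cubicExp b a ξ).re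
      = -a - (∫ ξ : ℝ in Ioi 0, cexp (θ * ξ * I) *
          ((6 * b * ξ + (3 * b * ξ ^ 2 + a) ^ 2) * cubicExp b a ξ)).re := by
    simpa [hg0, ← Complex.ofReal_pow, Complex.re_ofReal_mul] using congrArg Complex.re h
  calc θ ^ 2 * |(∫ ξ : ℝ in Ioi 0, cexp (θ * ξ * I) * cubicExp b a ξ).re|
      = |a + (∫ ξ : ℝ in Ioi 0, cexp (θ * ξ * I) *
          ((6 * b * ξ + (3 * b * ξ ^ 2 + a) ^ 2) * cubicExp b a ξ)).re| := by
        rw [← abs_of_nonneg (sq_nonneg θ), ← abs_mul, hre, ← abs_neg, neg_sub, sub_neg_eq_add,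
          add_comm]
    _ ≤ a + ‖∫ ξ : ℝ in Ioi 0, cexp (θ * ξ * I) *
          ((6 * b * ξ + (3 * b * ξ ^ 2 + a) ^ 2) * cubicExp b a ξ)‖ := by
        refine (abs_add_le _ _).trans ?_
        rw [abs_of_pos ha]
        gcongr
        exact Complex.abs_re_le_norm _
    _ ≤ _ := by
        gcongr
        refine (norm_integral_le_integral_norm _).trans_eq ?_
        simp_rw [norm_cexp_ofReal_mul_I_mul]

theorem two_add_sq_mul_abs_re_integral_cexp_mul_cubicExp_le (ha : 0 < a) (hb : b.re = -a)
    {r : ℝ} (hr : 0 ≤ r) (hbr : ‖b‖ ≤ a * r) (θ : ℝ) :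
    (2 + θ ^ 2) * |(∫ ξ : ℝ in Ioi 0, cexp (θ * ξ * I) * cubicExp b a ξ).re|
      ≤ (6 * Real.Gamma (1 / 3) + 12 * Real.Gamma (2 / 3) * r + 18 * Real.Gamma (5 / 3) * r ^ 2
        + 12 * r + 1) * (rexp (5 * a) * a ^ (-(1 : ℝ) / 3)) := by
  have h0 := (Complex.abs_re_le_norm _).trans (norm_integral_cexp_mul_cubicExp_le ha hb θ)
  have h2 := (sq_mul_abs_re_integral_cexp_mul_cubicExp_le ha hb θ).trans
    (add_le_add le_rfl (integral_norm_deriv2_cubicExp_le ha hb hbr))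
  have m00 := exp_mul_pow_mul_cubicMoment_le ha (j := 0) (k := 0) (by norm_num) (by norm_num)
    (by norm_num)
  have m11 := exp_mul_pow_mul_cubicMoment_le ha (j := 1) (k := 1) (by norm_num) (by norm_num)
    (by norm_num)
  have m24 := exp_mul_pow_mul_cubicMoment_le ha (j := 2) (k := 4) (by norm_num) (by norm_num)
    (by norm_num)
  have m22 := exp_mul_pow_mul_cubicMoment_le ha (j := 2) (k := 2) (by norm_num) (by norm_num)
    (by norm_num)
  have m20 := exp_mul_pow_mul_cubicMoment_le ha (j := 2) (k := 0) (by norm_num) (by norm_num)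
    (by norm_num)
  have ma := exp_mul_rpow_le ha (p := 1) (by norm_num) (by norm_num)
  norm_num [Real.Gamma_one] at m00 m11 m24 m22 m20 ma
  rw [← neg_div] at m00 m11 m24 m22 m20 ma
  have hS : a ≤ rexp (5 * a) * a ^ (-(1 : ℝ) / 3) :=
    (le_mul_of_one_le_left ha.le (Real.one_le_exp ha.le)).trans ma
  linarith [mul_le_mul_of_nonneg_left m11 (by positivity : (0 : ℝ) ≤ 6 * r),
    mul_le_mul_of_nonneg_left m24 (by positivity : (0 : ℝ) ≤ 9 * r ^ 2),
    mul_le_mul_of_nonneg_left m22 (by positivity : (0 : ℝ) ≤ 6 * r)]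

end DecayingCubicExp

noncomputable def ostKernelConst : ℝ :=
  18 * (Real.Gamma (1 / 3) + Real.Gamma (2 / 3) + Real.Gamma (5 / 3) + 1)

theorem ostKernelConst_pos : 0 < ostKernelConst := by
  have := Real.Gamma_pos_of_pos (by norm_num : (0 : ℝ) < 1 / 3)
  have := Real.Gamma_pos_of_pos (by norm_num : (0 : ℝ) < 2 / 3)
  have := Real.Gamma_pos_of_pos (by norm_num : (0 : ℝ) < 5 / 3)
  unfold ostKernelConst
  positivity

theorem gamma_poly_le_ostKernelConst_mul {r : ℝ} (hr : 0 ≤ r) :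
    6 * Real.Gamma (1 / 3) + 12 * Real.Gamma (2 / 3) * r + 18 * Real.Gamma (5 / 3) * r ^ 2
      + 12 * r + 1 ≤ ostKernelConst * (1 + (r + 1) ^ 2) := by
  have hΓ13 := Real.Gamma_pos_of_pos (by norm_num : (0 : ℝ) < 1 / 3)
  have hΓ23 := Real.Gamma_pos_of_pos (by norm_num : (0 : ℝ) < 2 / 3)
  have hΓ53 := Real.Gamma_pos_of_pos (by norm_num : (0 : ℝ) < 5 / 3)
  set D := 1 + (r + 1) ^ 2
  have h1D : 1 ≤ D := by nlinarith
  have hrD : r ≤ D := by nlinarith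
  have hr2D : r ^ 2 ≤ D := by nlinarith
  unfold ostKernelConst
  linarith [mul_le_mul_of_nonneg_left h1D hΓ13.le, mul_le_mul_of_nonneg_left hrD hΓ23.le,
    mul_le_mul_of_nonneg_left hr2D hΓ53.le, mul_nonneg hΓ13.le (by linarith : (0 : ℝ) ≤ D),
    mul_nonneg hΓ23.le (by linarith : (0 : ℝ) ≤ D), mul_nonneg hΓ53.le (by linarith : (0 : ℝ) ≤ D)]

section OST

variable {η t : ℝ}

theorem ostSymbol_eq_cubicExp {ξ : ℝ} (hξ : 0 ≤ ξ) :
    ostSymbol η t ξ = cubicExp (t * I - (η * t : ℝ)) (η * t : ℝ) ξ := by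
  rw [ostSymbol, cubicExp, abs_of_nonneg hξ]
  push_cast
  ring_nf

theorem ostSymbol_neg (ξ : ℝ) : ostSymbol η t (-ξ) = conj (ostSymbol η t ξ) := by
  rw [ostSymbol, ostSymbol, ← Complex.exp_conj, abs_neg]
  simp only [map_sub, map_mul, Complex.conj_I, Complex.conj_ofReal]
  push_cast
  ring_nf

theorem ostKernel_eq_two_mul_re (hη : 0 < η) (ht : 0 < t) (x : ℝ) :
    ostKernel η t x = 2 * (∫ ξ : ℝ in Ioi 0,
      cexp ((2 * π * x : ℝ) * ξ * I) * cubicExp (t * I - (η * t : ℝ)) (η * t : ℝ) ξ).re := by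
  have hEq : EqOn (fun ξ : ℝ => cexp (2 * π * I * (x * ξ : ℝ)) * ostSymbol η t ξ)
      (fun ξ : ℝ => cexp ((2 * π * x : ℝ) * ξ * I) *
        cubicExp (t * I - (η * t : ℝ)) (η * t : ℝ) ξ) (Ioi 0) := fun ξ hξ => by
    simp only [ostSymbol_eq_cubicExp (le_of_lt hξ)]
    push_cast
    ring_nf
  have hint := (integrableOn_cubicExp (b := t * I - (η * t : ℝ)) (mul_pos hη ht)
    (by simp)).cexp_ofReal_mul_I_mul (2 * π * x)
  rw [ostKernel, integral_eq_two_mul_re_integral_Ioi_of_conj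
    (hint.congr_fun hEq.symm measurableSet_Ioi) fun ξ => ?_,
    setIntegral_congr_fun measurableSet_Ioi hEq]
  rw [ostSymbol_neg, map_mul, ← Complex.exp_conj]
  simp only [map_mul, Complex.conj_I, Complex.conj_ofReal, map_ofNat]
  push_cast
  ring_nf

theorem one_add_sq_mul_norm_ostKernel_le (hη : 0 < η) (ht : 0 < t) (x : ℝ) :
    (1 + x ^ 2) * ‖ostKernel η t x‖
      ≤ ostKernelConst * (1 + (1 / η + 2) ^ 2)
        * (rexp (5 * (η * t)) * (η * t) ^ (-(1 : ℝ) / 3)) := by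
  have ha : 0 < η * t := mul_pos hη ht
  have hbr : ‖(t : ℂ) * I - (η * t : ℝ)‖ ≤ η * t * (1 / η + 1) := by
    refine (norm_sub_le _ _).trans_eq ?_
    simp only [norm_mul, Complex.norm_real, Complex.norm_I, Real.norm_of_nonneg ht.le,
      Real.norm_of_nonneg ha.le]
    field_simp
  have hJ := two_add_sq_mul_abs_re_integral_cexp_mul_cubicExp_le ha (by simp) (by positivity) hbr
    (2 * π * x)
  have hx : 2 * x ^ 2 ≤ (2 * π * x) ^ 2 := by
    rw [mul_pow]
    exact mul_le_mul_of_nonneg_right (by nlinarith [Real.pi_gt_three]) (sq_nonneg x)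
  rw [ostKernel_eq_two_mul_re hη ht x, norm_mul, Complex.norm_real, Complex.norm_two,
    Real.norm_eq_abs]
  set J := ∫ ξ : ℝ in Ioi 0, cexp ((2 * π * x : ℝ) * ξ * I) *
    cubicExp (t * I - (η * t : ℝ)) (η * t : ℝ) ξ
  calc (1 + x ^ 2) * (2 * |J.re|) ≤ (2 + (2 * π * x) ^ 2) * |J.re| := by
        nlinarith [abs_nonneg J.re]
    _ ≤ _ := hJ
    _ ≤ ostKernelConst * (1 + (1 / η + 1 + 1) ^ 2)
          * (rexp (5 * (η * t)) * (η * t) ^ (-(1 : ℝ) / 3)) :=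
        mul_le_mul_of_nonneg_right (gamma_poly_le_ostKernelConst_mul (by positivity))
          (by positivity)
    _ = _ := by ring

end OST

theorem stmt6 : ∃ C > (0:ℝ), ∀ η t x : ℝ, 0 < η → 0 < t →
    ‖ostKernel η t x‖ ≤
      (C * η ^ (-(1:ℝ)/3) * (1 + (1/η + 2) ^ 2)) *
        (Real.exp (5 * η * t) / t ^ ((1:ℝ)/3)) * (1 / (1 + |x| ^ 2)) := by
  refine ⟨ostKernelConst, ostKernelConst_pos, fun η t x hη ht => ?_⟩
  have hrpow : (η * t) ^ (-(1 : ℝ) / 3) = η ^ (-(1 : ℝ) / 3) / t ^ ((1 : ℝ) / 3) := by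
    rw [Real.mul_rpow hη.le ht.le, neg_div, Real.rpow_neg ht.le]
    ring
  rw [sq_abs, mul_one_div, le_div_iff₀ (by positivity), mul_comm _ (1 + x ^ 2)]
  refine (one_add_sq_mul_norm_ostKernel_le hη ht x).trans_eq ?_
  rw [hrpow]
  ring_nf
end
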